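/- For Hermitian matrices A_1, ..., A_n (n ≥ 2) and a density matrix ρ, Σ_{i=1}^n I_ρ(A_i) ≥ (1/(2(n−1))) Σ_{1≤i<j≤n} I_ρ(A_i + A_j). -/

import Mathlib

open Matrix Finset
open scoped ComplexOrder

/-- The positive semidefinite square root (definition of `Matrix.PosSemidef.sqrt` in the older Mathlib). -/
noncomputable def Matrix.PosSemidef.sqrt {d : ℕ} {ρ : Matrix (Fin d) (Fin d) ℂ}
    (hA : ρ.PosSemidef) : Matrix (Fin d) (Fin d) ℂ :=
  hA.1.eigenvectorUnitary.1 * diagonal ((↑) ∘ (√·) ∘ hA.1.eigenvalues) *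
  (star hA.1.eigenvectorUnitary : Matrix (Fin d) (Fin d) ℂ)

/-- Wigner–Yanase skew information `I_ρ(H) = (1/2)‖[√ρ, H]‖²` (Frobenius norm). -/
noncomputable def skewInfoR {d : ℕ} {ρ : Matrix (Fin d) (Fin d) ℂ}
    (hρ : ρ.PosSemidef) (H : Matrix (Fin d) (Fin d) ℂ) : ℝ :=
  1 / 2 * ∑ i, ∑ j, ‖(hρ.sqrt * H - H * hρ.sqrt) i j‖ ^ 2

/-- Each `f i` is counted once for every `j ≠ i`, as `(i, j)` or as `(j, i)`. -/
theorem Finset.sum_filter_lt_add {α M : Type*} [Fintype α] [LinearOrder α] [AddCommMonoid M]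
    (f : α → M) :
    ∑ p ∈ univ.filter (fun p : α × α => p.1 < p.2), (f p.1 + f p.2) =
      (Fintype.card α - 1) • ∑ i, f i := by
  have hswap : ∑ p ∈ univ.filter (fun p : α × α => p.1 < p.2), f p.2 =
      ∑ p ∈ univ.filter (fun p : α × α => p.2 < p.1), f p.1 :=
    sum_nbij' Prod.swap Prod.swap (by simp) (by simp) (by simp) (by simp) (by simp)
  have hoff : ∀ i : α, ∑ j ∈ univ.filter (fun j => j ≠ i), f i = (Fintype.card α - 1) • f i := by
    intro i
    rw [sum_const, filter_ne', card_erase_of_mem (mem_univ i), card_univ]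
  rw [sum_add_distrib, hswap, ← sum_union (disjoint_filter.2 fun p _ h => h.asymm),
    ← filter_or, smul_sum, ← sum_congr rfl fun i _ => hoff i, sum_filter, Fintype.sum_prod_type]
  simp only [sum_filter, lt_or_lt_iff_ne, ne_comm]

section SkewInformation

variable {d : ℕ} {ρ : Matrix (Fin d) (Fin d) ℂ} (hρ : ρ.PosSemidef)

theorem skewInfoR_nonneg (H : Matrix (Fin d) (Fin d) ℂ) : 0 ≤ skewInfoR hρ H := by
  unfold skewInfoR
  positivity

/-- `H ↦ [√ρ, H]` is linear, so the entrywise parallelogram law in `ℂ` carries over. -/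
theorem skewInfoR_add_add_skewInfoR_sub (A B : Matrix (Fin d) (Fin d) ℂ) :
    skewInfoR hρ (A + B) + skewInfoR hρ (A - B) = 2 * (skewInfoR hρ A + skewInfoR hρ B) := by
  have hadd : hρ.sqrt * (A + B) - (A + B) * hρ.sqrt =
      (hρ.sqrt * A - A * hρ.sqrt) + (hρ.sqrt * B - B * hρ.sqrt) := by
    rw [mul_add, add_mul]; abel
  have hsub : hρ.sqrt * (A - B) - (A - B) * hρ.sqrt =
      (hρ.sqrt * A - A * hρ.sqrt) - (hρ.sqrt * B - B * hρ.sqrt) := by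
    rw [mul_sub, sub_mul]; abel
  unfold skewInfoR
  rw [hadd, hsub]
  set X := hρ.sqrt * A - A * hρ.sqrt
  set Y := hρ.sqrt * B - B * hρ.sqrt
  simp only [Matrix.add_apply, Matrix.sub_apply]
  have h : ∑ i, ∑ j, ‖X i j + Y i j‖ ^ 2 + ∑ i, ∑ j, ‖X i j - Y i j‖ ^ 2 =
      2 * (∑ i, ∑ j, ‖X i j‖ ^ 2 + ∑ i, ∑ j, ‖Y i j‖ ^ 2) := by
    simp only [← sum_add_distrib, mul_sum, parallelogram_law_with_norm ℝ]
  linear_combination (1 / 2 : ℝ) * h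

theorem skewInfoR_add_le (A B : Matrix (Fin d) (Fin d) ℂ) :
    skewInfoR hρ (A + B) ≤ 2 * (skewInfoR hρ A + skewInfoR hρ B) := by
  linarith [skewInfoR_add_add_skewInfoR_sub hρ A B, skewInfoR_nonneg hρ (A - B)]

theorem sum_skewInfoR_pairs_add_le {n : ℕ} (A : Fin n → Matrix (Fin d) (Fin d) ℂ) :
    ∑ p ∈ univ.filter (fun p : Fin n × Fin n => p.1 < p.2), skewInfoR hρ (A p.1 + A p.2) ≤
      2 * (((n - 1 : ℕ) : ℝ) * ∑ i, skewInfoR hρ (A i)) := by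
  calc ∑ p ∈ univ.filter (fun p : Fin n × Fin n => p.1 < p.2), skewInfoR hρ (A p.1 + A p.2)
      ≤ ∑ p ∈ univ.filter (fun p : Fin n × Fin n => p.1 < p.2),
          2 * (skewInfoR hρ (A p.1) + skewInfoR hρ (A p.2)) :=
        sum_le_sum fun p _ => skewInfoR_add_le hρ _ _
    _ = 2 * (((n - 1 : ℕ) : ℝ) * ∑ i, skewInfoR hρ (A i)) := by
        rw [← mul_sum, sum_filter_lt_add (fun i => skewInfoR hρ (A i)), Fintype.card_fin,
          nsmul_eq_mul]

end SkewInformation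

theorem skewInfo_sum_ge_pairs_add_general {d n : ℕ} (hn : 2 ≤ n)
    (ρ : Matrix (Fin d) (Fin d) ℂ) (hρ : ρ.PosSemidef)
    (A : Fin n → Matrix (Fin d) (Fin d) ℂ) :
    ∑ i, skewInfoR hρ (A i) ≥
      (1 / (2 * ((n : ℝ) - 1))) *
        ∑ p ∈ Finset.univ.filter (fun p : Fin n × Fin n => p.1 < p.2),
          skewInfoR hρ (A p.1 + A p.2) := by
  have hpos : (0 : ℝ) < (n : ℝ) - 1 := by
    have : (2 : ℝ) ≤ n := by exact_mod_cast hn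
    linarith
  rw [ge_iff_le, one_div, inv_mul_le_iff₀ (by linarith)]
  have := sum_skewInfoR_pairs_add_le hρ A
  rwa [Nat.cast_sub (by omega), Nat.cast_one, ← mul_assoc] at this

theorem skewInfo_sum_ge_pairs_add {d n : ℕ} (hn : 2 ≤ n)
    (ρ : Matrix (Fin d) (Fin d) ℂ) (hρ : ρ.PosSemidef) (hτ : ρ.trace = 1)
    (A : Fin n → Matrix (Fin d) (Fin d) ℂ) (hA : ∀ i, (A i).IsHermitian) :
    ∑ i, skewInfoR hρ (A i) ≥
      (1 / (2 * ((n : ℝ) - 1))) *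
        ∑ p ∈ Finset.univ.filter (fun p : Fin n × Fin n => p.1 < p.2),
          skewInfoR hρ (A p.1 + A p.2) :=
  skewInfo_sum_ge_pairs_add_general hn ρ hρ A
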